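/- arXiv:2303.09009 — 2 statements merged into one kernel-verified Lean document; each statement's English description precedes it below -/
import Mathlib

section
/- Let F : ℝ^n → ℝ be differentiable with F ∈ S_{μ, L_F} for some μ > 0, let N be a real n×n skew-symmetric matrix and B a real n×n matrix with N = B^sym − 2B where B^sym = B + Bᵀ, L_{B^sym} = ‖B^sym‖ the spectral norm, and let x* satisfy ∇F(x*) + N x* = 0. If 0 < α < 1/max{2L_{B^sym}, 2L_F}, then the Lyapunov function E^{αBD}(x) := (1/2)‖x − x*‖²_{I − αB^sym} − α D_F(x*, x) satisfies E^{αBD}(x) ≥ 0 for all x, and E^{αBD}(x) = 0 if and only if x = x*. -/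
open Matrix

/-- The spectral norm (ℓ²-operator norm) of a real square matrix. -/
noncomputable def specNorm {n : ℕ} (M : Matrix (Fin n) (Fin n) ℝ) : ℝ :=
  ‖Matrix.toEuclideanCLM (𝕜 := ℝ) M‖

/-- The continuous linear functional `v ↦ ⟨z, v⟩` on `ℝⁿ` (used to express that
`z` is the gradient of a function at a point, via `HasFDerivAt`). -/
noncomputable def dpCLM {m : ℕ} (z : Fin m → ℝ) : (Fin m → ℝ) →L[ℝ] ℝ :=
  LinearMap.toContinuousLinearMap
    { toFun := fun v => z ⬝ᵥ v
      map_add' := fun a b => by simp [dotProduct_add]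
      map_smul' := fun c a => by simp [dotProduct_smul] }

/-!
The Bregman term is bounded by the `L_F`-smoothness of `F` and the indefinite part of the metric
`I - α Bˢʸᵐ` by the spectral norm, so `E(x) ≥ ½ (1 - α ‖Bˢʸᵐ‖ - α L_F) ‖x - x*‖²`.
The step-size condition makes the constant positive, which gives both nonnegativity and
definiteness.
-/

def bregman {ι : Type*} [Fintype ι] (F : (ι → ℝ) → ℝ) (gradF : (ι → ℝ) → ι → ℝ)
    (x y : ι → ℝ) : ℝ :=
  F x - F y - gradF y ⬝ᵥ (x - y)

/-- The paper's `E^{αBD}`, with `S = Bˢʸᵐ`. -/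
noncomputable def gssLyapunov {ι : Type*} [Fintype ι] [DecidableEq ι] (F : (ι → ℝ) → ℝ)
    (gradF : (ι → ℝ) → ι → ℝ) (S : Matrix ι ι ℝ) (α : ℝ) (xs x : ι → ℝ) : ℝ :=
  1 / 2 * ((x - xs) ⬝ᵥ ((1 - α • S) *ᵥ (x - xs))) - α * bregman F gradF xs x

theorem abs_dotProduct_mulVec_le_specNorm {n : ℕ} (M : Matrix (Fin n) (Fin n) ℝ)
    (v : Fin n → ℝ) : |v ⬝ᵥ M *ᵥ v| ≤ specNorm M * (v ⬝ᵥ v) := by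
  set u : EuclideanSpace ℝ (Fin n) := WithLp.toLp 2 v
  have hquad : v ⬝ᵥ M *ᵥ v = inner ℝ u (Matrix.toEuclideanCLM (𝕜 := ℝ) M u) := by
    rw [Matrix.toEuclideanCLM_toLp, EuclideanSpace.inner_toLp_toLp, star_trivial, dotProduct_comm]
  have hnorm : v ⬝ᵥ v = ‖u‖ ^ 2 := by
    rw [← real_inner_self_eq_norm_sq, EuclideanSpace.inner_toLp_toLp, star_trivial]
  rw [hquad, hnorm]
  calc |inner ℝ u (Matrix.toEuclideanCLM (𝕜 := ℝ) M u)|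
      ≤ ‖u‖ * ‖Matrix.toEuclideanCLM (𝕜 := ℝ) M u‖ := abs_real_inner_le_norm _ _
    _ ≤ ‖u‖ * (specNorm M * ‖u‖) := by
        gcongr
        exact (Matrix.toEuclideanCLM (𝕜 := ℝ) M).le_opNorm u
    _ = specNorm M * ‖u‖ ^ 2 := by ring

theorem dotProduct_one_sub_smul_mulVec_ge {n : ℕ} (S : Matrix (Fin n) (Fin n) ℝ) {α : ℝ} (hα : 0 ≤ α)
    (v : Fin n → ℝ) : (1 - α * specNorm S) * (v ⬝ᵥ v) ≤ v ⬝ᵥ (1 - α • S) *ᵥ v := by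
  have hS : v ⬝ᵥ S *ᵥ v ≤ specNorm S * (v ⬝ᵥ v) :=
    le_of_abs_le (abs_dotProduct_mulVec_le_specNorm S v)
  rw [sub_mulVec, one_mulVec, smul_mulVec, dotProduct_sub, dotProduct_smul, smul_eq_mul]
  nlinarith [mul_le_mul_of_nonneg_left hS hα]

theorem gssLyapunov_ge {n : ℕ} (F : (Fin n → ℝ) → ℝ) (gradF : (Fin n → ℝ) → Fin n → ℝ)
    {LF α : ℝ} (hα : 0 ≤ α)
    (hupper : ∀ x y, bregman F gradF x y ≤ LF / 2 * ((x - y) ⬝ᵥ (x - y)))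
    (S : Matrix (Fin n) (Fin n) ℝ) (xs x : Fin n → ℝ) :
    (1 - α * specNorm S - α * LF) / 2 * ((x - xs) ⬝ᵥ (x - xs)) ≤
      gssLyapunov F gradF S α xs x := by
  have hquad := dotProduct_one_sub_smul_mulVec_ge S hα (x - xs)
  have hD : bregman F gradF xs x ≤ LF / 2 * ((x - xs) ⬝ᵥ (x - xs)) := by
    simpa only [← neg_sub x xs, neg_dotProduct, dotProduct_neg, neg_neg] using hupper xs x
  unfold gssLyapunov
  nlinarith [mul_le_mul_of_nonneg_left hD hα]

theorem mul_add_mul_lt_one_of_lt_one_div_max {α a b : ℝ} (hα : 0 < α)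
    (hlt : α < 1 / max (2 * a) (2 * b)) : α * a + α * b < 1 := by
  have hM : 0 < max (2 * a) (2 * b) := one_div_pos.mp (hα.trans hlt)
  have hαM : α * max (2 * a) (2 * b) < 1 := (lt_div_iff₀ hM).mp hlt
  nlinarith [le_max_left (2 * a) (2 * b), le_max_right (2 * a) (2 * b)]

theorem gss_lyapunov_nonneg_general
    {n : ℕ} (LF α : ℝ)
    (F : (Fin n → ℝ) → ℝ) (gradF : (Fin n → ℝ) → (Fin n → ℝ))
    (hupper : ∀ x y : Fin n → ℝ,
      F x - F y - gradF y ⬝ᵥ (x - y) ≤ LF / 2 * ((x - y) ⬝ᵥ (x - y)))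
    (B : Matrix (Fin n) (Fin n) ℝ)
    (xs : Fin n → ℝ)
    (hα0 : 0 < α)
    (hα1 : α < 1 / max (2 * specNorm (B + Bᵀ)) (2 * LF)) :
    (∀ x : Fin n → ℝ,
      0 ≤ (1 / 2) * ((x - xs) ⬝ᵥ ((1 - α • (B + Bᵀ)).mulVec (x - xs)))
            - α * (F xs - F x - gradF x ⬝ᵥ (xs - x))) ∧
    (∀ x : Fin n → ℝ,
      ((1 / 2) * ((x - xs) ⬝ᵥ ((1 - α • (B + Bᵀ)).mulVec (x - xs)))
            - α * (F xs - F x - gradF x ⬝ᵥ (xs - x)) = 0) ↔ x = xs) := by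
  have hc : 0 < (1 - α * specNorm (B + Bᵀ) - α * LF) / 2 := by
    linarith [mul_add_mul_lt_one_of_lt_one_div_max hα0 hα1]
  have hE := gssLyapunov_ge F gradF hα0.le hupper (B + Bᵀ) xs
  refine ⟨fun x => (mul_nonneg hc.le (dotProduct_self_star_nonneg _)).trans (hE x),
    fun x => ⟨fun hzero => ?_, fun hx => by simp [hx]⟩⟩
  have hsq : (x - xs) ⬝ᵥ (x - xs) ≤ 0 :=
    nonpos_of_mul_nonpos_right ((hE x).trans hzero.le) hc
  exact sub_eq_zero.mp (dotProduct_self_eq_zero.mp (hsq.antisymm (dotProduct_self_star_nonneg _)))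

/-- **Nonnegativity and definiteness of the GSS Lyapunov function.**
Let `F ∈ S_{μ,L_F}` (`μ > 0`) be differentiable with gradient `∇F`, `N = Bˢʸᵐ - 2B`
skew-symmetric with `Bˢʸᵐ = B + Bᵀ`, and `∇F(x*) + N x* = 0`.  For
`0 < α < 1/max{2‖Bˢʸᵐ‖, 2L_F}` the Lyapunov function
`E(x) = ½‖x - x*‖²_{I - αBˢʸᵐ} - α D_F(x*, x)` satisfies `E(x) ≥ 0`, with
`E(x) = 0` iff `x = x*`. -/
theorem gss_lyapunov_nonneg
    {n : ℕ} (μ LF α : ℝ) (hμ : 0 < μ)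
    (F : (Fin n → ℝ) → ℝ) (gradF : (Fin n → ℝ) → (Fin n → ℝ))
    (hdiff : ∀ x, HasFDerivAt F (dpCLM (gradF x)) x)
    (hlower : ∀ x y : Fin n → ℝ,
      μ / 2 * ((x - y) ⬝ᵥ (x - y)) ≤ F x - F y - gradF y ⬝ᵥ (x - y))
    (hupper : ∀ x y : Fin n → ℝ,
      F x - F y - gradF y ⬝ᵥ (x - y) ≤ LF / 2 * ((x - y) ⬝ᵥ (x - y)))
    (N B : Matrix (Fin n) (Fin n) ℝ)
    (hskew : Nᵀ = -N)
    (hNB : N = (B + Bᵀ) - (2 : ℝ) • B)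
    (xs : Fin n → ℝ) (hxs : gradF xs + N.mulVec xs = 0)
    (hα0 : 0 < α)
    (hα1 : α < 1 / max (2 * specNorm (B + Bᵀ)) (2 * LF)) :
    (∀ x : Fin n → ℝ,
      0 ≤ (1 / 2) * ((x - xs) ⬝ᵥ ((1 - α • (B + Bᵀ)).mulVec (x - xs)))
            - α * (F xs - F x - gradF x ⬝ᵥ (xs - x))) ∧
    (∀ x : Fin n → ℝ,
      ((1 / 2) * ((x - xs) ⬝ᵥ ((1 - α • (B + Bᵀ)).mulVec (x - xs)))
            - α * (F xs - F x - gradF x ⬝ᵥ (xs - x)) = 0) ↔ x = xs) :=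
  gss_lyapunov_nonneg_general LF α F gradF hupper B xs hα0 hα1
end

section
/- Let F : ℝ^n → ℝ be differentiable with F ∈ S_μ, μ > 0, let N be a real n×n skew-symmetric matrix, and let x* satisfy ∇F(x*) + N x* = 0. Suppose α_k > 0 and the points x̂_{k+1}, y_{k+1} satisfy the IMEX step (x̂_{k+1} − x_k)/α_k = y_k − x̂_{k+1} and (y_{k+1} − y_k)/α_k = x̂_{k+1} − y_{k+1} − (1/μ)(∇F(x̂_{k+1}) + N y_{k+1}). Then, with E(x,y) = D_F(x,x*) + (μ/2)‖y − x*‖², E_k = E(x_k, y_k) and Ê_{k+1} = E(x̂_{k+1}, y_{k+1}), one has Ê_{k+1} − E_k ≤ −α_k Ê_{k+1} − α_k⟨∇F(x̂_{k+1}) − ∇F(x*), y_{k+1} − y_k⟩ − (μ/2)‖y_{k+1} − y_k‖² − (α_k μ/2)‖y_{k+1} − x̂_{k+1}‖² − (μ/2)‖x̂_{k+1} − x_k‖². -/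
open Matrix

section

variable {ι : Type*} [Fintype ι]

section CommRing

variable {R : Type*} [CommRing R]

theorem two_mul_sub_dotProduct_sub (a b c : ι → R) :
    2 * ((a - b) ⬝ᵥ (a - c))
      = (a - b) ⬝ᵥ (a - b) + (a - c) ⬝ᵥ (a - c) - (b - c) ⬝ᵥ (b - c) := by
  simp only [sub_dotProduct, dotProduct_sub, dotProduct_comm b a, dotProduct_comm c a,
    dotProduct_comm c b]
  ring

theorem dotProduct_mulVec_self_eq_zero_of_transpose_eq_neg [NoZeroDivisors R] [CharZero R]
    {N : Matrix ι ι R} (hN : Nᵀ = -N) (v : ι → R) : v ⬝ᵥ N *ᵥ v = 0 := by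
  rw [← CharZero.eq_neg_self_iff]
  conv_lhs => rw [dotProduct_mulVec, ← mulVec_transpose, hN, dotProduct_comm]
  rw [neg_mulVec, dotProduct_neg]

/-- `D_F(x, y)`, with `g` in the role of `∇F`. -/
def bregmanDiv (F : (ι → R) → R) (g : (ι → R) → ι → R) (x y : ι → R) : R :=
  F x - F y - g y ⬝ᵥ (x - y)

theorem bregmanDiv_self (F : (ι → R) → R) (g : (ι → R) → ι → R) (x : ι → R) :
    bregmanDiv F g x x = 0 := by
  simp [bregmanDiv]

theorem bregmanDiv_three_point (F : (ι → R) → R) (g : (ι → R) → ι → R) (x x' z : ι → R) :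
    bregmanDiv F g x z - bregmanDiv F g x' z + bregmanDiv F g x' x
      = (g x - g z) ⬝ᵥ (x - x') := by
  simp only [bregmanDiv, sub_dotProduct, dotProduct_sub]
  ring

end CommRing

theorem bregmanDiv_sub_bregmanDiv_le {μ : ℝ} (F : (ι → ℝ) → ℝ) (g : (ι → ℝ) → ι → ℝ)
    {x x' : ι → ℝ} (hF : μ / 2 * ((x' - x) ⬝ᵥ (x' - x)) ≤ bregmanDiv F g x' x) (z : ι → ℝ) :
    bregmanDiv F g x z - bregmanDiv F g x' z
      ≤ (g x - g z) ⬝ᵥ (x - x') - μ / 2 * ((x - x') ⬝ᵥ (x - x')) := by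
  rw [← neg_sub x x', neg_dotProduct_neg] at hF
  linarith [bregmanDiv_three_point F g x x' z]

/-- Energy balance of the implicit `y`-update: `gx` is the gradient at the explicit point and
`gs + N xs = 0` the optimality condition. -/
theorem implicit_step_energy_eq {μ α : ℝ} (hμ : μ ≠ 0) {N : Matrix ι ι ℝ} (hN : Nᵀ = -N)
    {xs xhat y y' gx gs : ι → ℝ} (hxs : gs + N *ᵥ xs = 0)
    (hstep : y' - y = α • (xhat - y' - (1 / μ) • (gx + N *ᵥ y'))) :
    μ / 2 * ((y' - xs) ⬝ᵥ (y' - xs)) - μ / 2 * ((y - xs) ⬝ᵥ (y - xs))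
      = -(α * ((gx - gs) ⬝ᵥ (y' - xs)))
        + α * μ / 2 * ((xhat - xs) ⬝ᵥ (xhat - xs) - (y' - xhat) ⬝ᵥ (y' - xhat)
          - (y' - xs) ⬝ᵥ (y' - xs))
        - μ / 2 * ((y' - y) ⬝ᵥ (y' - y)) := by
  have hforce : (gx + N *ᵥ y') ⬝ᵥ (y' - xs) = (gx - gs) ⬝ᵥ (y' - xs) := by
    have hsplit : gx + N *ᵥ y' = (gx - gs) + N *ᵥ (y' - xs) + (gs + N *ᵥ xs) := by
      rw [mulVec_sub]; abel
    rw [hsplit, hxs, add_zero, add_dotProduct, dotProduct_comm (N *ᵥ _),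
      dotProduct_mulVec_self_eq_zero_of_transpose_eq_neg hN, add_zero]
  have hwork : μ * ((y' - y) ⬝ᵥ (y' - xs))
      = α * μ * ((xhat - y') ⬝ᵥ (y' - xs)) - α * ((gx - gs) ⬝ᵥ (y' - xs)) := by
    rw [hstep, smul_dotProduct, sub_dotProduct, smul_dotProduct, hforce, smul_eq_mul,
      smul_eq_mul]
    field_simp
  have hy := two_mul_sub_dotProduct_sub y' y xs
  have hxhat := two_mul_sub_dotProduct_sub y' xhat xs
  rw [← neg_sub y' xhat, neg_dotProduct] at hwork
  linear_combination hwork - μ / 2 * hy - α * μ / 2 * hxhat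

end

theorem imex_one_step_decay_general
    {n : ℕ} (μ αk : ℝ) (hμ : 0 < μ) (hαk : 0 < αk)
    (F : (Fin n → ℝ) → ℝ) (gradF : (Fin n → ℝ) → (Fin n → ℝ))
    (hlower : ∀ x y : Fin n → ℝ,
      μ / 2 * ((x - y) ⬝ᵥ (x - y)) ≤ F x - F y - gradF y ⬝ᵥ (x - y))
    (N : Matrix (Fin n) (Fin n) ℝ) (hskew : Nᵀ = -N)
    (xs : Fin n → ℝ) (hxs : gradF xs + N.mulVec xs = 0)
    (xk yk xhat yk1 : Fin n → ℝ)
    (hstep1 : xhat - xk = αk • (yk - xhat))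
    (hstep2 : yk1 - yk =
      αk • (xhat - yk1 - (1 / μ) • (gradF xhat + N.mulVec yk1))) :
    ((F xhat - F xs - gradF xs ⬝ᵥ (xhat - xs)) + μ / 2 * ((yk1 - xs) ⬝ᵥ (yk1 - xs)))
      - ((F xk - F xs - gradF xs ⬝ᵥ (xk - xs)) + μ / 2 * ((yk - xs) ⬝ᵥ (yk - xs)))
      ≤ -(αk * ((F xhat - F xs - gradF xs ⬝ᵥ (xhat - xs))
            + μ / 2 * ((yk1 - xs) ⬝ᵥ (yk1 - xs))))
        - αk * ((gradF xhat - gradF xs) ⬝ᵥ (yk1 - yk))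
        - μ / 2 * ((yk1 - yk) ⬝ᵥ (yk1 - yk))
        - αk * μ / 2 * ((yk1 - xhat) ⬝ᵥ (yk1 - xhat))
        - μ / 2 * ((xhat - xk) ⬝ᵥ (xhat - xk)) := by
  have hx := bregmanDiv_sub_bregmanDiv_le F gradF (hlower xk xhat) xs
  have hmono := bregmanDiv_sub_bregmanDiv_le F gradF (hlower xs xhat) xs
  rw [bregmanDiv_self, sub_zero] at hmono
  have hy := implicit_step_energy_eq hμ.ne' hskew hxs hstep2
  have hexplicit : (gradF xhat - gradF xs) ⬝ᵥ (xhat - xk)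
      = αk * ((gradF xhat - gradF xs) ⬝ᵥ (yk1 - xs))
        - αk * ((gradF xhat - gradF xs) ⬝ᵥ (yk1 - yk))
        - αk * ((gradF xhat - gradF xs) ⬝ᵥ (xhat - xs)) := by
    rw [hstep1, dotProduct_smul, smul_eq_mul, ← mul_sub, ← mul_sub, ← dotProduct_sub,
      ← dotProduct_sub]
    congr 2; abel
  unfold bregmanDiv at hx hmono
  linarith [mul_le_mul_of_nonneg_left hmono hαk.le]

/-- **One-step decay estimate of the IMEX scheme for the accelerated gradient flow.**
With `E(x,y) = D_F(x,x*) + (μ/2)‖y - x*‖²`, if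
`(x̂₊ - x)/α = y - x̂₊` and `(y₊ - y)/α = x̂₊ - y₊ - (1/μ)(∇F(x̂₊) + N y₊)`, then
`E(x̂₊,y₊) - E(x,y) ≤ -α E(x̂₊,y₊) - α⟨∇F(x̂₊) - ∇F(x*), y₊ - y⟩ - (μ/2)‖y₊ - y‖²
 - (αμ/2)‖y₊ - x̂₊‖² - (μ/2)‖x̂₊ - x‖²`. -/
theorem imex_one_step_decay
    {n : ℕ} (μ αk : ℝ) (hμ : 0 < μ) (hαk : 0 < αk)
    (F : (Fin n → ℝ) → ℝ) (gradF : (Fin n → ℝ) → (Fin n → ℝ))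
    (hdiff : ∀ x, HasFDerivAt F (dpCLM (gradF x)) x)
    (hlower : ∀ x y : Fin n → ℝ,
      μ / 2 * ((x - y) ⬝ᵥ (x - y)) ≤ F x - F y - gradF y ⬝ᵥ (x - y))
    (N : Matrix (Fin n) (Fin n) ℝ) (hskew : Nᵀ = -N)
    (xs : Fin n → ℝ) (hxs : gradF xs + N.mulVec xs = 0)
    (xk yk xhat yk1 : Fin n → ℝ)
    (hstep1 : xhat - xk = αk • (yk - xhat))
    (hstep2 : yk1 - yk =
      αk • (xhat - yk1 - (1 / μ) • (gradF xhat + N.mulVec yk1))) :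
    ((F xhat - F xs - gradF xs ⬝ᵥ (xhat - xs)) + μ / 2 * ((yk1 - xs) ⬝ᵥ (yk1 - xs)))
      - ((F xk - F xs - gradF xs ⬝ᵥ (xk - xs)) + μ / 2 * ((yk - xs) ⬝ᵥ (yk - xs)))
      ≤ -(αk * ((F xhat - F xs - gradF xs ⬝ᵥ (xhat - xs))
            + μ / 2 * ((yk1 - xs) ⬝ᵥ (yk1 - xs))))
        - αk * ((gradF xhat - gradF xs) ⬝ᵥ (yk1 - yk))
        - μ / 2 * ((yk1 - yk) ⬝ᵥ (yk1 - yk))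
        - αk * μ / 2 * ((yk1 - xhat) ⬝ᵥ (yk1 - xhat))
        - μ / 2 * ((xhat - xk) ⬝ᵥ (xhat - xk)) :=
  imex_one_step_decay_general μ αk hμ hαk F gradF hlower N hskew xs hxs xk yk xhat yk1 hstep1 hstep2
end
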